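/- Let k be a field, V a finite-dimensional k-vector space, f an endomorphism of V, g an automorphism of V, and c ∈ k an element that is not a root of unity. If g ∘ f ∘ g⁻¹ = c · f, then f is nilpotent. -/

import Mathlib

/-!
Conjugation by `g` is an algebra automorphism of `End V` sending `f` to `c • f`, hence `f ^ m`
to `c ^ m • f ^ m`. If no power of `f` vanished, the `f ^ m` would be eigenvectors of this
automorphism for the pairwise distinct eigenvalues `c ^ m`, giving an infinite linearly
independent family in the finite-dimensional space `End V`. (For `c = 0`, where the `c ^ m` are
not distinct, the relation forces `f = 0` directly.)
-/

open Module

theorem pow_injective_of_ne_zero_of_not_isOfFinOrder {K : Type*} [GroupWithZero K] {c : K}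
    (hc₀ : c ≠ 0) (hc : ¬IsOfFinOrder c) : Function.Injective (c ^ · : ℕ → K) := by
  have hu : ¬IsOfFinOrder (Units.mk0 c hc₀) := by rwa [← Units.isOfFinOrder_val]
  intro m n hmn
  exact injective_pow_iff_not_isOfFinOrder.mpr hu (Units.val_injective (by simpa using hmn))

theorem Module.End.exists_eq_zero_of_apply_eq_pow_smul {R M : Type*} [CommRing R] [IsDomain R]
    [AddCommGroup M] [Module R M] [Module.Finite R M] [IsTorsionFree R M]
    (T : End R M) {c : R} (hc : Function.Injective (c ^ · : ℕ → R)) {v : ℕ → M}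
    (hv : ∀ m, T (v m) = c ^ m • v m) : ∃ m, v m = 0 := by
  by_contra! hv₀
  exact Module.Finite.not_linearIndependent_of_infinite v <|
    T.eigenvectors_linearIndependent' _ hc v fun m ↦ ⟨mem_eigenspace_iff.mpr (hv m), hv₀ m⟩

/-- if `f` is an endomorphism of a finite-dimensional vector space `V`
over a field `k`, `g` is an automorphism of `V`, `c ∈ k` is not a root of unity, and
`g ∘ f ∘ g⁻¹ = c • f`, then `f` is nilpotent. -/
theorem statement16 {k : Type*} [Field k] {V : Type*} [AddCommGroup V] [Module k V]
    [FiniteDimensional k V] (f : V →ₗ[k] V) (g : V ≃ₗ[k] V) (c : k)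
    (hc : ∀ m : ℕ, 0 < m → c ^ m ≠ 1)
    (hconj : g.toLinearMap ∘ₗ f ∘ₗ g.symm.toLinearMap = c • f) :
    IsNilpotent f := by
  set G := g.conjAlgEquiv k
  have hGf : G f = c • f := hconj
  rcases eq_or_ne c 0 with rfl | hc₀
  · rw [zero_smul, map_eq_zero_iff G G.injective] at hGf
    exact hGf ▸ IsNilpotent.zero
  have hc_inj := pow_injective_of_ne_zero_of_not_isOfFinOrder hc₀ <| by
    rw [isOfFinOrder_iff_pow_eq_one]
    rintro ⟨m, hm, hcm⟩
    exact hc m hm hcm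
  exact End.exists_eq_zero_of_apply_eq_pow_smul G.toLinearMap hc_inj (v := (f ^ ·))
    fun m ↦ by simp [map_pow, hGf, smul_pow]
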